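/- arXiv:2105.05223 — 3 statements merged into one kernel-verified Lean document; each statement's English description precedes it below -/
import Mathlib

section
/- Let G be a group and F ⊆ G' two families of subgroups of G. Let Q = ℓ∞(G/F)/ℝ·1 be the quotient normed space of bounded real-valued functions on G/F by the constants, a normed ℝG-module via (g·f)(x) = f(g⁻¹·x), and let Q^# be its dual. Define the relative Johnson cocycle J_F : (G/F)² → Q^# by J_F(x,y)([f]) = f(y) − f(x). Suppose there exist a bounded G-equivariant function c : (G/G')² → Q^# with δ¹c = 0 and a bounded G-equivariant function b : G/F → Q^# such that the restriction of c to (G/F)² equals J_F + δ⁰b. Then every subgroup H ∈ G' is amenable relative to the family F|_H = {L ∩ H : L ∈ F}, i.e. the H-set ⨿_{L∈F|_H} H/L admits an H-invariant mean. -/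
open scoped BigOperators

universe u v w

namespace RelBdd

variable {G : Type u} [Group G]

/-- `F` is a family of subgroups of `G`: nonempty, closed under conjugation and
closed under taking subgroups. -/
def IsFamily (F : Set (Subgroup G)) : Prop :=
  F.Nonempty ∧
    (∀ H ∈ F, ∀ g : G, Subgroup.map ((MulAut.conj g).toMonoidHom) H ∈ F) ∧
    ∀ H ∈ F, ∀ K : Subgroup G, K ≤ H → K ∈ F

/-- The `G`-set `G/F = ⨿_{H ∈ F} G/H`. -/
abbrev Cos (G : Type u) [Group G] (F : Set (Subgroup G)) : Type u :=
  Σ H : F, G ⧸ (H : Subgroup G)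

instance (F : Set (Subgroup G)) : SMul G (Cos G F) :=
  ⟨fun g x => ⟨x.1, g • x.2⟩⟩

instance (F : Set (Subgroup G)) : MulAction G (Cos G F) where
  one_smul := by
    rintro ⟨H, q⟩
    show (⟨H, (1 : G) • q⟩ : Cos G F) = ⟨H, q⟩
    rw [one_smul]
  mul_smul g h := by
    rintro ⟨H, q⟩
    show (⟨H, (g * h) • q⟩ : Cos G F) = ⟨H, g • h • q⟩
    rw [mul_smul]

/-- A function into a normed space is bounded. -/
def Bdd {α : Type*} {V : Type*} [Norm V] (f : α → V) : Prop :=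
  ∃ C : ℝ, ∀ x, ‖f x‖ ≤ C

/-- The simplicial coboundary operator on `V`-valued cochains on a set `S`. -/
def delta {S : Type*} {V : Type*} [AddCommGroup V] [Module ℝ V] (n : ℕ)
    (f : (Fin (n + 1) → S) → V) : (Fin (n + 2) → S) → V :=
  fun x => ∑ i : Fin (n + 2), ((-1 : ℝ) ^ (i : ℕ)) • f (fun j => x (i.succAbove j))

/-- `ℓ∞(S)`: the space of bounded real valued functions on `S`. -/
def Linf (S : Type v) : Submodule ℝ (S → ℝ) where
  carrier := {f | ∃ C : ℝ, ∀ s, |f s| ≤ C}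
  add_mem' := by
    rintro f g ⟨C, hC⟩ ⟨D, hD⟩
    exact ⟨C + D, fun s => (abs_add_le _ _).trans (add_le_add (hC s) (hD s))⟩
  zero_mem' := ⟨0, fun s => by simp⟩
  smul_mem' := by
    rintro r f ⟨C, hC⟩
    refine ⟨|r| * C, fun s => ?_⟩
    show |r * f s| ≤ |r| * C
    rw [abs_mul]
    exact mul_le_mul_of_nonneg_left (hC s) (abs_nonneg r)

/-- The constant function `r` as an element of `ℓ∞(S)`. -/
def constLinf (S : Type v) (r : ℝ) : Linf S :=
  ⟨fun _ => r, ⟨|r|, fun _ => le_rfl⟩⟩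

/-- Precomposition with a map `φ : S → S` as a linear endomorphism of `ℓ∞(S)`. -/
def compL {S : Type v} (φ : S → S) : Linf S →ₗ[ℝ] Linf S where
  toFun f := ⟨fun s => (f : S → ℝ) (φ s), by
    obtain ⟨C, hC⟩ := f.2
    exact ⟨C, fun s => hC (φ s)⟩⟩
  map_add' f g := by ext s; rfl
  map_smul' r f := by ext s; rfl

/-- There exists a `K`-invariant mean on the `K`-set `S`. -/
def InvariantMean (K : Type u) (S : Type v) [Group K] [MulAction K S] : Prop :=
  ∃ m : Linf S →ₗ[ℝ] ℝ,
    m (constLinf S 1) = 1 ∧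
    (∀ f : Linf S, (∀ s, 0 ≤ (f : S → ℝ) s) → 0 ≤ m f) ∧
    ∀ (g : K) (f : Linf S), m (compL (fun s => g⁻¹ • s) f) = m f

/-- The restriction `F|_H = {L ∩ H : L ∈ F}` of a collection of subgroups of `G` to
a collection of subgroups of `H`. -/
def restrictedFamily (F : Set (Subgroup G)) (H : Subgroup G) : Set (Subgroup H) :=
  {K | ∃ L ∈ F, K = L.subgroupOf H}

/-- `K` is amenable relative to the collection `𝒦` of its subgroups: the `K`-set
`⨿_{L ∈ 𝒦} K/L` admits a `K`-invariant mean. -/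
def RelativelyAmenable (K : Type u) [Group K] (𝒦 : Set (Subgroup K)) : Prop :=
  InvariantMean K (Cos K 𝒦)

/-- The family generated by a set `ℋ` of subgroups: all subgroups of conjugates of
members of `ℋ`, together with the trivial subgroup. -/
def famGen (ℋ : Set (Subgroup G)) : Set (Subgroup G) :=
  {K | K = ⊥ ∨ ∃ H ∈ ℋ, ∃ g : G, ∀ x ∈ K, g⁻¹ * x * g ∈ H}

/-- The left multiplication action of `g ∈ G` on a normed `ℝG`-module `W`, as a
continuous linear map. -/
def smulCLM {W : Type w} [NormedAddCommGroup W] [NormedSpace ℝ W] [DistribMulAction G W]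
    [SMulCommClass G ℝ W] (hW : ∀ (g : G) (w : W), ‖g • w‖ = ‖w‖) (g : G) : W →L[ℝ] W :=
  LinearMap.mkContinuous
    { toFun := fun w => g • w
      map_add' := fun a b => smul_add g a b
      map_smul' := fun r w => smul_comm g r w }
    1 (fun w => by simp [hW])

/-- Evaluation at a point `s ∈ S`, as a linear functional on `ℓ∞(S)`. -/
noncomputable def evalLinf {S : Type v} (s : S) : Linf S →ₗ[ℝ] ℝ :=
  (LinearMap.proj s).comp (Linf S).subtype

/-- The inclusion of `G`-sets `G/F ⊆ G/G'` for families `F ⊆ G'`. -/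
def inclCos {G : Type u} [Group G] {F F' : Set (Subgroup G)} (h : F ⊆ F') :
    Cos G F → Cos G F' :=
  fun x => ⟨⟨(x.1 : Subgroup G), h x.1.2⟩, x.2⟩

/-- The relative Johnson cocycle `J_F (x₀, x₁) = ε_{x₁} - ε_{x₀}`, with values in
the dual of `Q = ℓ∞(G/F)/ℝ·1`, realized as the space of bounded linear functionals
on `ℓ∞(G/F)` vanishing on the constant functions. -/
noncomputable def johnsonCocycle (G : Type u) [Group G] (F : Set (Subgroup G))
    (x : Fin 2 → Cos G F) : Linf (Cos G F) →ₗ[ℝ] ℝ :=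
  evalLinf (x 1) - evalLinf (x 0)

/-!
Fix the point `e = H ∈ G/G'`, which `H` fixes. Restricted to `(G/F)²` the cocycle `c` is
`ε_{y'} - ε_y + b(y') - b(y)`, so the cocycle identity `c(e, y') - c(e, y) = c(y, y')` makes
`ν = ε_y + b(y) - c(e, y) ∈ ℓ∞(G/F)^*` independent of `y ∈ G/F`. By equivariance of `b` and `c`,
`ν` is then invariant under the stabilizer `H` of `e`; it is bounded and `ν(1) = 1`.
It need not be positive, but its positive part `ν⁺(f) = sup {ν g | 0 ≤ g ≤ f}` is an
`H`-invariant positive functional with `ν⁺(1) ≥ 1`, so `ν⁺ / ν⁺(1)` is an `H`-invariant mean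
on `G/F`. Every `H`-stabilizer in `G/F` lies in `F|_H`, so `G/F` maps `H`-equivariantly to
`⨿_{L ∈ F|_H} H/L`, and the mean pushes forward.
-/

open scoped Pointwise

section DualPosPart

variable {S : Type v}

lemma Linf.le_iff {f g : Linf S} : f ≤ g ↔ ∀ s, (f : S → ℝ) s ≤ (g : S → ℝ) s := Iff.rfl

lemma Linf.nonneg_iff {f : Linf S} : 0 ≤ f ↔ ∀ s, 0 ≤ (f : S → ℝ) s := Iff.rfl

lemma Linf.smul_nonneg {r : ℝ} (hr : 0 ≤ r) {f : Linf S} (hf : 0 ≤ f) : 0 ≤ r • f :=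
  fun s => mul_nonneg hr (hf s)

lemma Linf.compL_nonneg (φ : S → S) {f : Linf S} (hf : 0 ≤ f) : 0 ≤ compL φ f :=
  fun s => hf (φ s)

def Linf.inf (f g : Linf S) : Linf S :=
  ⟨fun s => min ((f : S → ℝ) s) ((g : S → ℝ) s), by
    obtain ⟨C, hC⟩ := f.2
    obtain ⟨D, hD⟩ := g.2
    exact ⟨max C D, fun s => abs_min_le_max_abs_abs.trans (max_le_max (hC s) (hD s))⟩⟩

lemma Linf.sub_inf_zero_nonneg (f : Linf S) : 0 ≤ f - Linf.inf f 0 :=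
  fun s => sub_nonneg.mpr (min_le_left ((f : S → ℝ) s) 0)

lemma Linf.neg_inf_zero_nonneg (f : Linf S) : 0 ≤ -Linf.inf f 0 :=
  fun s => neg_nonneg.mpr (min_le_right ((f : S → ℝ) s) 0)

lemma Linf.eq_sub_inf_zero_sub (f : Linf S) : f = (f - Linf.inf f 0) - -Linf.inf f 0 := by
  abel

/-- The Riesz decomposition property of `ℓ∞(S)`. -/
lemma Linf.Icc_zero_add {f₁ f₂ : Linf S} (h₁ : 0 ≤ f₁) (h₂ : 0 ≤ f₂) :
    Set.Icc 0 (f₁ + f₂) = Set.Icc 0 f₁ + Set.Icc 0 f₂ := by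
  ext g
  constructor
  · rintro ⟨hg₀, hg⟩
    refine ⟨Linf.inf g f₁, ⟨fun s => le_min (hg₀ s) (h₁ s), fun s => min_le_right _ _⟩,
      g - Linf.inf g f₁, ⟨fun s => sub_nonneg.mpr (min_le_left _ _), fun s => ?_⟩,
      add_sub_cancel _ _⟩
    have hgs : (g : S → ℝ) s ≤ (f₁ : S → ℝ) s + (f₂ : S → ℝ) s := hg s
    have hf₂s : 0 ≤ (f₂ : S → ℝ) s := h₂ s
    change (g : S → ℝ) s - min ((g : S → ℝ) s) ((f₁ : S → ℝ) s) ≤ (f₂ : S → ℝ) s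
    rcases min_cases ((g : S → ℝ) s) ((f₁ : S → ℝ) s) with ⟨h, _⟩ | ⟨h, _⟩ <;> linarith
  · rintro ⟨a, ⟨ha₀, ha⟩, b, ⟨hb₀, hb⟩, rfl⟩
    exact ⟨add_nonneg ha₀ hb₀, add_le_add ha hb⟩

lemma Linf.Icc_zero_smul {r : ℝ} (hr : 0 < r) (f : Linf S) :
    Set.Icc 0 (r • f) = r • Set.Icc 0 f := by
  ext g
  rw [Set.mem_smul_set_iff_inv_smul_mem₀ hr.ne', Set.mem_Icc, Set.mem_Icc, Linf.nonneg_iff,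
    Linf.nonneg_iff, Linf.le_iff, Linf.le_iff]
  change (∀ s, _) ∧ (∀ s, _ ≤ r * _) ↔ (∀ s, 0 ≤ r⁻¹ * _) ∧ ∀ s, r⁻¹ * _ ≤ _
  simp only [inv_mul_le_iff₀ hr, mul_nonneg_iff_of_pos_left (inv_pos.mpr hr)]

lemma Linf.image_compL_Icc_zero (e : S ≃ S) (f : Linf S) :
    compL e '' Set.Icc 0 f = Set.Icc 0 (compL e f) := by
  ext g
  constructor
  · rintro ⟨g, ⟨hg₀, hg⟩, rfl⟩
    exact ⟨fun s => hg₀ (e s), fun s => hg (e s)⟩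
  · rintro ⟨hg₀, hg⟩
    refine ⟨compL e.symm g, ⟨fun s => hg₀ (e.symm s), fun s => ?_⟩, ?_⟩
    · simpa [compL] using hg (e.symm s)
    · ext s
      simp [compL]

def Linf.IsBoundedFunctional (μ : Linf S →ₗ[ℝ] ℝ) : Prop :=
  ∃ C : ℝ, ∀ (f : Linf S) (B : ℝ), (∀ s, |(f : S → ℝ) s| ≤ B) → |μ f| ≤ C * B

/-- Only meaningful for `0 ≤ f`: otherwise `Set.Icc 0 f` is empty and `sSup ∅ = 0`. -/
noncomputable def dualPosPart (μ : Linf S →ₗ[ℝ] ℝ) (f : Linf S) : ℝ :=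
  sSup (μ '' Set.Icc 0 f)

variable {μ : Linf S →ₗ[ℝ] ℝ}

lemma Linf.IsBoundedFunctional.bddAbove_image_Icc (hμ : Linf.IsBoundedFunctional μ)
    (f : Linf S) : BddAbove (μ '' Set.Icc 0 f) := by
  obtain ⟨C, hC⟩ := hμ
  obtain ⟨B, hB⟩ := f.2
  refine ⟨C * B, ?_⟩
  rintro _ ⟨g, ⟨hg₀, hg⟩, rfl⟩
  have hgB : ∀ s, |(g : S → ℝ) s| ≤ B := fun s =>
    (abs_of_nonneg (hg₀ s)).trans_le ((hg s).trans ((le_abs_self _).trans (hB s)))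
  exact (abs_le.mp (hC g B hgB)).2

lemma le_dualPosPart (hμ : Linf.IsBoundedFunctional μ) {f g : Linf S}
    (hg : g ∈ Set.Icc 0 f) : μ g ≤ dualPosPart μ f :=
  le_csSup (hμ.bddAbove_image_Icc f) ⟨g, hg, rfl⟩

lemma dualPosPart_add (hμ : Linf.IsBoundedFunctional μ) {f₁ f₂ : Linf S} (h₁ : 0 ≤ f₁)
    (h₂ : 0 ≤ f₂) : dualPosPart μ (f₁ + f₂) = dualPosPart μ f₁ + dualPosPart μ f₂ := by
  rw [dualPosPart, Linf.Icc_zero_add h₁ h₂, Set.image_add,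
    csSup_add ((Set.nonempty_Icc.mpr h₁).image μ) (hμ.bddAbove_image_Icc f₁)
      ((Set.nonempty_Icc.mpr h₂).image μ) (hμ.bddAbove_image_Icc f₂)]
  rfl

lemma dualPosPart_zero (hμ : Linf.IsBoundedFunctional μ) : dualPosPart μ 0 = 0 := by
  have h := dualPosPart_add hμ (le_refl (0 : Linf S)) le_rfl
  rw [add_zero] at h
  linarith

lemma dualPosPart_smul {r : ℝ} (hr : 0 < r) (f : Linf S) :
    dualPosPart μ (r • f) = r * dualPosPart μ f := by
  rw [dualPosPart, Linf.Icc_zero_smul hr, image_smul_setₛₗ, RingHom.id_apply,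
    Real.sSup_smul_of_nonneg hr.le]
  rfl

lemma dualPosPart_compL (e : S ≃ S) (he : μ.comp (compL e) = μ) (f : Linf S) :
    dualPosPart μ (compL e f) = dualPosPart μ f := by
  rw [dualPosPart, ← Linf.image_compL_Icc_zero, Set.image_image]
  simp_rw [← LinearMap.comp_apply, he]
  rfl

variable (μ) in
noncomputable def dualPosPartExt (f : Linf S) : ℝ :=
  dualPosPart μ (f - Linf.inf f 0) - dualPosPart μ (-Linf.inf f 0)

lemma dualPosPartExt_sub (hμ : Linf.IsBoundedFunctional μ) {a b : Linf S} (ha : 0 ≤ a)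
    (hb : 0 ≤ b) : dualPosPartExt μ (a - b) = dualPosPart μ a - dualPosPart μ b := by
  have hsplit : (a - b - Linf.inf (a - b) 0) + b = -Linf.inf (a - b) 0 + a := by abel
  have h := congrArg (dualPosPart μ) hsplit
  rw [dualPosPart_add hμ (Linf.sub_inf_zero_nonneg _) hb,
    dualPosPart_add hμ (Linf.neg_inf_zero_nonneg _) ha] at h
  rw [dualPosPartExt]
  linarith

lemma dualPosPartExt_eq (hμ : Linf.IsBoundedFunctional μ) {f : Linf S} (hf : 0 ≤ f) :
    dualPosPartExt μ f = dualPosPart μ f := by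
  simpa [dualPosPart_zero hμ] using dualPosPartExt_sub hμ hf le_rfl

lemma dualPosPartExt_compL (hμ : Linf.IsBoundedFunctional μ) (e : S ≃ S)
    (he : μ.comp (compL e) = μ) (f : Linf S) :
    dualPosPartExt μ (compL e f) = dualPosPartExt μ f := by
  conv_lhs => rw [Linf.eq_sub_inf_zero_sub f, map_sub]
  rw [dualPosPartExt_sub hμ (Linf.compL_nonneg e (Linf.sub_inf_zero_nonneg f))
    (Linf.compL_nonneg e (Linf.neg_inf_zero_nonneg f)), dualPosPart_compL e he,
    dualPosPart_compL e he, dualPosPartExt]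

noncomputable def dualPosPartLinear (hμ : Linf.IsBoundedFunctional μ) : Linf S →ₗ[ℝ] ℝ where
  toFun := dualPosPartExt μ
  map_add' f g := by
    have hpf := Linf.sub_inf_zero_nonneg f
    have hnf := Linf.neg_inf_zero_nonneg f
    have hpg := Linf.sub_inf_zero_nonneg g
    have hng := Linf.neg_inf_zero_nonneg g
    have hfg : f + g = ((f - Linf.inf f 0) + (g - Linf.inf g 0))
        - (-Linf.inf f 0 + -Linf.inf g 0) := by abel
    rw [hfg, dualPosPartExt_sub hμ (add_nonneg hpf hpg) (add_nonneg hnf hng),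
      dualPosPart_add hμ hpf hpg, dualPosPart_add hμ hnf hng, dualPosPartExt, dualPosPartExt]
    ring
  map_smul' r f := by
    have hp := Linf.sub_inf_zero_nonneg f
    have hn := Linf.neg_inf_zero_nonneg f
    rw [RingHom.id_apply, smul_eq_mul]
    rcases lt_trichotomy r 0 with hr | rfl | hr
    · have hrf : r • f = (-r) • -Linf.inf f 0 - (-r) • (f - Linf.inf f 0) := by
        conv_lhs => rw [Linf.eq_sub_inf_zero_sub f]
        module
      have hr' : 0 < -r := neg_pos.mpr hr
      rw [hrf, dualPosPartExt_sub hμ (Linf.smul_nonneg hr'.le hn) (Linf.smul_nonneg hr'.le hp),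
        dualPosPart_smul hr', dualPosPart_smul hr', dualPosPartExt]
      ring
    · rw [zero_smul, zero_mul, ← sub_self 0, dualPosPartExt_sub hμ le_rfl le_rfl, sub_self]
    · conv_lhs => rw [Linf.eq_sub_inf_zero_sub f, smul_sub]
      rw [dualPosPartExt_sub hμ (Linf.smul_nonneg hr.le hp) (Linf.smul_nonneg hr.le hn),
        dualPosPart_smul hr, dualPosPart_smul hr, dualPosPartExt]
      ring

theorem invariantMean_of_invariant_functional {K : Type*} [Group K] [MulAction K S]
    (hμ : Linf.IsBoundedFunctional μ) (hone : μ (constLinf S 1) = 1)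
    (hinv : ∀ (k : K) (f : Linf S), μ (compL (fun s => k⁻¹ • s) f) = μ f) :
    InvariantMean K S := by
  have hone_nonneg : 0 ≤ constLinf S 1 := fun _ => zero_le_one
  have hP : dualPosPartLinear hμ (constLinf S 1) = dualPosPart μ (constLinf S 1) :=
    dualPosPartExt_eq hμ hone_nonneg
  have hP_pos : 0 < dualPosPart μ (constLinf S 1) :=
    one_pos.trans_le (hone.symm.trans_le (le_dualPosPart hμ ⟨hone_nonneg, le_rfl⟩))
  refine ⟨(dualPosPart μ (constLinf S 1))⁻¹ • dualPosPartLinear hμ, ?_, fun f hf => ?_,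
    fun k f => ?_⟩
  · rw [LinearMap.smul_apply, hP, smul_eq_mul, inv_mul_cancel₀ hP_pos.ne']
  · rw [LinearMap.smul_apply, smul_eq_mul]
    refine mul_nonneg (inv_nonneg.mpr hP_pos.le) ?_
    change 0 ≤ dualPosPartExt μ f
    rw [dualPosPartExt_eq hμ hf]
    exact (map_zero μ).symm.trans_le (le_dualPosPart hμ ⟨le_rfl, hf⟩)
  · rw [LinearMap.smul_apply, LinearMap.smul_apply]
    congr 1
    exact dualPosPartExt_compL hμ (MulAction.toPerm k⁻¹)
      (LinearMap.ext fun f => hinv k f) f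

end DualPosPart

def Linf.comap {S : Type v} {T : Type w} (φ : S → T) : Linf T →ₗ[ℝ] Linf S where
  toFun f := ⟨fun s => (f : T → ℝ) (φ s), by
    obtain ⟨C, hC⟩ := f.2
    exact ⟨C, fun s => hC (φ s)⟩⟩
  map_add' _ _ := rfl
  map_smul' _ _ := rfl

theorem InvariantMean.map {K : Type u} [Group K] {S : Type v} {T : Type w} [MulAction K S]
    [MulAction K T] (φ : S →[K] T) (h : InvariantMean K S) : InvariantMean K T := by
  obtain ⟨m, hone, hpos, hinv⟩ := h
  refine ⟨m.comp (Linf.comap φ), hone, fun f hf => hpos _ fun s => hf (φ s), fun k f => ?_⟩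
  have hcomm : Linf.comap φ (compL (fun t => k⁻¹ • t) f)
      = compL (fun s => k⁻¹ • s) (Linf.comap φ f) := by
    ext s
    exact congrArg (f : T → ℝ) (φ.map_smul k⁻¹ s).symm
  rw [LinearMap.comp_apply, hcomm, hinv, LinearMap.comp_apply]

/-- Send `k • x₀` to `k · Stab(x₀)`, for a chosen point `x₀` in each orbit. -/
theorem exists_mulActionHom_cos {K : Type u} [Group K] {X : Type v} [MulAction K X]
    {𝒦 : Set (Subgroup K)} (h𝒦 : ∀ x : X, MulAction.stabilizer K x ∈ 𝒦) :
    Nonempty (X →[K] Cos K 𝒦) := by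
  let rep (x : X) : X := (Quotient.mk (MulAction.orbitRel K X) x).out
  have rep_smul (k : K) (x : X) : rep (k • x) = rep x :=
    congrArg Quotient.out (Quotient.sound ⟨k, rfl⟩)
  have hrep (x : X) : ∃ k : K, k • rep x = x := by
    obtain ⟨k, hk⟩ := MulAction.mem_orbit_iff.mp
      (Quotient.mk_out (s := MulAction.orbitRel K X) x)
    exact ⟨k⁻¹, inv_smul_eq_iff.mpr hk.symm⟩
  choose κ hκ using hrep
  let cosOf (y : X) (k : K) : Cos K 𝒦 :=
    ⟨⟨MulAction.stabilizer K y, h𝒦 y⟩, (k : K ⧸ MulAction.stabilizer K y)⟩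
  refine ⟨⟨fun x => cosOf (rep x) (κ x), fun k x => ?_⟩⟩
  change cosOf (rep (k • x)) (κ (k • x)) = cosOf (rep x) (k * κ x)
  have hκ' : κ (k • x) • rep x = (k * κ x) • rep x := by
    rw [mul_smul, hκ, ← rep_smul k x, hκ]
  rw [rep_smul]
  exact congrArg (Sigma.mk _) (MulAction.injective_ofQuotientStabilizer K (rep x)
    (a₁ := (κ (k • x) : K ⧸ _)) (a₂ := (k * κ x : K)) hκ')

theorem stabilizer_mem_restrictedFamily {F : Set (Subgroup G)}
    (hF : ∀ L ∈ F, ∀ g : G, Subgroup.map ((MulAut.conj g).toMonoidHom) L ∈ F)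
    (H : Subgroup G) (x : Cos G F) : MulAction.stabilizer H x ∈ restrictedFamily F H := by
  obtain ⟨⟨L, hL⟩, q⟩ := x
  obtain ⟨g, rfl⟩ := QuotientGroup.mk_surjective q
  refine ⟨L.map (MulAut.conj g).toMonoidHom, hF L hL g, ?_⟩
  have hstab := MulAction.stabilizer_smul_eq_stabilizer_map_conj g ((1 : G) : G ⧸ L)
  rw [MulAction.stabilizer_quotient, MulAction.Quotient.smul_coe, smul_eq_mul, mul_one] at hstab
  ext k
  rw [Subgroup.mem_subgroupOf, ← hstab, MulAction.mem_stabilizer_iff,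
    MulAction.mem_stabilizer_iff]
  change (⟨_, (k : G) • _⟩ : Cos G F) = _ ↔ _
  simp

section Cochains

variable {S : Type*} {V : Type*} [AddCommGroup V] [Module ℝ V]

lemma delta_zero_apply (f : (Fin 1 → S) → V) (x₀ x₁ : S) :
    delta 0 f ![x₀, x₁] = f ![x₁] - f ![x₀] := by
  have h₀ : (fun j => ![x₀, x₁] (Fin.succAbove 0 j)) = ![x₁] := by
    funext j; fin_cases j; rfl
  have h₁ : (fun j => ![x₀, x₁] (Fin.succAbove 1 j)) = ![x₀] := by
    funext j; fin_cases j; rfl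
  change ∑ i : Fin 2, ((-1 : ℝ) ^ (i : ℕ)) • f (fun j => ![x₀, x₁] (i.succAbove j)) = _
  rw [Fin.sum_univ_two, h₀, h₁]
  simp [sub_eq_add_neg]

lemma delta_one_apply (f : (Fin 2 → S) → V) (x₀ x₁ x₂ : S) :
    delta 1 f ![x₀, x₁, x₂] = f ![x₁, x₂] - f ![x₀, x₂] + f ![x₀, x₁] := by
  have h₀ : (fun j => ![x₀, x₁, x₂] (Fin.succAbove 0 j)) = ![x₁, x₂] := by
    funext j; fin_cases j <;> rfl
  have h₁ : (fun j => ![x₀, x₁, x₂] (Fin.succAbove 1 j)) = ![x₀, x₂] := by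
    funext j; fin_cases j <;> rfl
  have h₂ : (fun j => ![x₀, x₁, x₂] (Fin.succAbove 2 j)) = ![x₀, x₁] := by
    funext j; fin_cases j <;> rfl
  change ∑ i : Fin 3, ((-1 : ℝ) ^ (i : ℕ)) • f (fun j => ![x₀, x₁, x₂] (i.succAbove j)) = _
  rw [Fin.sum_univ_three, h₀, h₁, h₂]
  simp [sub_eq_add_neg]

end Cochains

section Basepoint

variable {F F' : Set (Subgroup G)} (hFF' : F ⊆ F')
  (c : (Fin 2 → Cos G F') → (Linf (Cos G F) →ₗ[ℝ] ℝ))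
  (b : (Fin 1 → Cos G F) → (Linf (Cos G F) →ₗ[ℝ] ℝ))

noncomputable def basepointFunctional (e : Cos G F') (y : Cos G F) : Linf (Cos G F) →ₗ[ℝ] ℝ :=
  evalLinf y + b ![y] - c ![e, inclCos hFF' y]

variable {c b}

/-- On `(G/F)²` the cocycle `c` is `c(y, y') = ε_{y'} - ε_y + b(y') - b(y)`, and
`c(e, y') - c(e, y) = c(y, y')`; so the `y`-dependence cancels. -/
lemma basepointFunctional_eq (hccocycle : delta 1 c = 0)
    (hrestr : ∀ x : Fin 2 → Cos G F,
      c (fun j => inclCos hFF' (x j)) = johnsonCocycle G F x + delta 0 b x)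
    (e : Cos G F') (y y' : Cos G F) :
    basepointFunctional hFF' c b e y = basepointFunctional hFF' c b e y' := by
  have hcoc := congrFun hccocycle ![e, inclCos hFF' y, inclCos hFF' y']
  rw [delta_one_apply, Pi.zero_apply] at hcoc
  have hincl : (fun j => inclCos hFF' (![y, y'] j)) = ![inclCos hFF' y, inclCos hFF' y'] := by
    funext j; fin_cases j <;> rfl
  have hres := hrestr ![y, y']
  rw [hincl, delta_zero_apply] at hres
  change c _ = (evalLinf y' - evalLinf y) + _ at hres
  simp only [basepointFunctional]
  linear_combination (norm := module) hres - hcoc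

lemma basepointFunctional_smul
    (hcequiv : ∀ (g : G) (x : Fin 2 → Cos G F'),
      c (fun j => g • x j) = (c x).comp (compL (fun s => g • s)))
    (hbequiv : ∀ (g : G) (x : Fin 1 → Cos G F),
      b (fun j => g • x j) = (b x).comp (compL (fun s => g • s)))
    (g : G) (e : Cos G F') (y : Cos G F) :
    basepointFunctional hFF' c b (g • e) (g • y)
      = (basepointFunctional hFF' c b e y).comp (compL (fun s => g • s)) := by
  have hb := hbequiv g ![y]
  have hc := hcequiv g ![e, inclCos hFF' y]
  have hy : (fun j => g • ![y] j) = ![g • y] := by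
    funext j; fin_cases j; rfl
  have hey : (fun j => g • ![e, inclCos hFF' y] j) = ![g • e, inclCos hFF' (g • y)] := by
    funext j; fin_cases j <;> rfl
  rw [hy] at hb
  rw [hey] at hc
  rw [basepointFunctional, basepointFunctional, LinearMap.sub_comp, LinearMap.add_comp, ← hb,
    ← hc]
  rfl

lemma basepointFunctional_const
    (hcconst : ∀ (x : Fin 2 → Cos G F') (r : ℝ), c x (constLinf (Cos G F) r) = 0)
    (hbconst : ∀ (x : Fin 1 → Cos G F) (r : ℝ), b x (constLinf (Cos G F) r) = 0)
    (e : Cos G F') (y : Cos G F) :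
    basepointFunctional hFF' c b e y (constLinf (Cos G F) 1) = 1 := by
  simp only [basepointFunctional, LinearMap.sub_apply, LinearMap.add_apply, hbconst, hcconst]
  simp [evalLinf, constLinf]

lemma isBoundedFunctional_basepointFunctional
    (hcbdd : ∃ C : ℝ, ∀ (x : Fin 2 → Cos G F') (f : Linf (Cos G F)) (B : ℝ),
      (∀ s, |(f : Cos G F → ℝ) s| ≤ B) → |c x f| ≤ C * B)
    (hbbdd : ∃ C : ℝ, ∀ (x : Fin 1 → Cos G F) (f : Linf (Cos G F)) (B : ℝ),
      (∀ s, |(f : Cos G F → ℝ) s| ≤ B) → |b x f| ≤ C * B)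
    (e : Cos G F') (y : Cos G F) :
    Linf.IsBoundedFunctional (basepointFunctional hFF' c b e y) := by
  obtain ⟨Cc, hCc⟩ := hcbdd
  obtain ⟨Cb, hCb⟩ := hbbdd
  refine ⟨1 + Cb + Cc, fun f B hB => ?_⟩
  have hev : evalLinf y f = (f : Cos G F → ℝ) y := rfl
  simp only [basepointFunctional, LinearMap.sub_apply, LinearMap.add_apply, hev]
  linarith [abs_sub ((f : Cos G F → ℝ) y + b ![y] f) (c ![e, inclCos hFF' y] f),
    abs_add_le ((f : Cos G F → ℝ) y) (b ![y] f), hB y, hCb ![y] f B hB,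
    hCc ![e, inclCos hFF' y] f B hB]

end Basepoint

theorem johnson_class_implies_relatively_amenable_general (G : Type u) [Group G]
    (F F' : Set (Subgroup G)) (hF : IsFamily F) (hFF' : F ⊆ F')
    (c : (Fin 2 → Cos G F') → (Linf (Cos G F) →ₗ[ℝ] ℝ))
    (hcconst : ∀ (x : Fin 2 → Cos G F') (r : ℝ), c x (constLinf (Cos G F) r) = 0)
    (hcbdd : ∃ C : ℝ, ∀ (x : Fin 2 → Cos G F') (f : Linf (Cos G F)) (B : ℝ),
      (∀ s, |(f : Cos G F → ℝ) s| ≤ B) → |c x f| ≤ C * B)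
    (hcequiv : ∀ (g : G) (x : Fin 2 → Cos G F'),
      c (fun j => g • x j) = (c x).comp (compL (fun s => g • s)))
    (hccocycle : delta 1 c = 0)
    (b : (Fin 1 → Cos G F) → (Linf (Cos G F) →ₗ[ℝ] ℝ))
    (hbconst : ∀ (x : Fin 1 → Cos G F) (r : ℝ), b x (constLinf (Cos G F) r) = 0)
    (hbbdd : ∃ C : ℝ, ∀ (x : Fin 1 → Cos G F) (f : Linf (Cos G F)) (B : ℝ),
      (∀ s, |(f : Cos G F → ℝ) s| ≤ B) → |b x f| ≤ C * B)
    (hbequiv : ∀ (g : G) (x : Fin 1 → Cos G F),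
      b (fun j => g • x j) = (b x).comp (compL (fun s => g • s)))
    (hrestr : ∀ x : Fin 2 → Cos G F,
      c (fun j => inclCos hFF' (x j)) = johnsonCocycle G F x + delta 0 b x) :
    ∀ H : Subgroup G, H ∈ F' →
      RelativelyAmenable H (restrictedFamily F H) := by
  intro H hH
  obtain ⟨L, hL⟩ := hF.1
  let e : Cos G F' := ⟨⟨H, hH⟩, ((1 : G) : G ⧸ H)⟩
  let y : Cos G F := ⟨⟨L, hL⟩, ((1 : G) : G ⧸ L)⟩
  have he (k : H) : (k : G) • e = e := by
    have hk : (k : G) ∈ MulAction.stabilizer G ((1 : G) : G ⧸ H) := by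
      rw [MulAction.stabilizer_quotient]
      exact k.2
    change (⟨_, (k : G) • _⟩ : Cos G F') = _
    rw [MulAction.mem_stabilizer_iff.mp hk]
  have hmean : InvariantMean H (Cos G F) := by
    refine invariantMean_of_invariant_functional
      (isBoundedFunctional_basepointFunctional hFF' hcbdd hbbdd e y)
      (basepointFunctional_const hFF' hcconst hbconst e y) fun k f => ?_
    have hν := basepointFunctional_smul hFF' hcequiv hbequiv ((k⁻¹ : H) : G) e y
    rw [he, basepointFunctional_eq hFF' hccocycle hrestr e _ y] at hν
    exact (LinearMap.congr_fun hν f).symm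
  obtain ⟨φ⟩ := exists_mulActionHom_cos (stabilizer_mem_restrictedFamily hF.2.1 H)
  exact hmean.map φ

/-- Theorem 4.8, (iv) ⇒ (i).  Let `F ⊆ G'` be families of
subgroups of `G` and let `Q^#` be the dual of `Q = ℓ∞(G/F)/ℝ·1` (realized as the
functionals on `ℓ∞(G/F)` vanishing on constants).  If the relative Johnson class
`[J_F] ∈ H¹_{F,b}(G; Q^#)` lies in the image of the canonical map
`H¹_{G',b}(G; Q^#) → H¹_{F,b}(G; Q^#)` — i.e. there are a bounded `G`-equivariant
cocycle `c` on `(G/G')²` and a bounded `G`-equivariant `b` on `G/F` with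
`c|_{(G/F)²} = J_F + δ⁰b` — then every `H ∈ G'` is amenable relative to `F|_H`. -/
theorem johnson_class_implies_relatively_amenable (G : Type u) [Group G]
    (F F' : Set (Subgroup G)) (hF : IsFamily F) (hF' : IsFamily F') (hFF' : F ⊆ F')
    (c : (Fin 2 → Cos G F') → (Linf (Cos G F) →ₗ[ℝ] ℝ))
    (hcconst : ∀ (x : Fin 2 → Cos G F') (r : ℝ), c x (constLinf (Cos G F) r) = 0)
    (hcbdd : ∃ C : ℝ, ∀ (x : Fin 2 → Cos G F') (f : Linf (Cos G F)) (B : ℝ),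
      (∀ s, |(f : Cos G F → ℝ) s| ≤ B) → |c x f| ≤ C * B)
    (hcequiv : ∀ (g : G) (x : Fin 2 → Cos G F'),
      c (fun j => g • x j) = (c x).comp (compL (fun s => g • s)))
    (hccocycle : delta 1 c = 0)
    (b : (Fin 1 → Cos G F) → (Linf (Cos G F) →ₗ[ℝ] ℝ))
    (hbconst : ∀ (x : Fin 1 → Cos G F) (r : ℝ), b x (constLinf (Cos G F) r) = 0)
    (hbbdd : ∃ C : ℝ, ∀ (x : Fin 1 → Cos G F) (f : Linf (Cos G F)) (B : ℝ),
      (∀ s, |(f : Cos G F → ℝ) s| ≤ B) → |b x f| ≤ C * B)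
    (hbequiv : ∀ (g : G) (x : Fin 1 → Cos G F),
      b (fun j => g • x j) = (b x).comp (compL (fun s => g • s)))
    (hrestr : ∀ x : Fin 2 → Cos G F,
      c (fun j => inclCos hFF' (x j)) = johnsonCocycle G F x + delta 0 b x) :
    ∀ H : Subgroup G, H ∈ F' →
      RelativelyAmenable H (restrictedFamily F H) :=
  johnson_class_implies_relatively_amenable_general G F F' hF hFF' c hcconst hcbdd hcequiv hccocycle
    b hbconst hbbdd hbequiv hrestr

end RelBdd
end

section
/- Let G be a group and F a family of subgroups of G. Then G is amenable relative to F (i.e. the G-set G/F admits a G-invariant mean) if and only if the trivial normed ℝG-module ℝ (with trivial G-action and the absolute value norm) is relatively F-injective. -/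
open scoped BigOperators

universe u v w

namespace RelBdd

variable {G : Type u} [Group G]

/-!
(⇒) If `i : A → B` has `H`-equivariant retractions `σ_H` and `ψ` is invariant, each
`τ_H = ψ ∘ σ_H` is `H`-invariant, so `b ↦ (gH ↦ τ_H (g⁻¹ • b))` is a well-defined equivariant map
`B → ℓ∞(G/F)`; averaging it with the invariant mean gives the invariant extension of `ψ`.

(⇐) The constants `ℝ → ℓ∞(G/F)` are `F`-strongly injective, the retraction for `H` being evaluation
at the coset `H`, which `H` fixes. Extending the identity of `ℝ` gives an invariant bounded
functional `Ψ` on `ℓ∞(G/F)` with `Ψ 1 = 1`. It need not be positive, but its positive part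
`Ψ⁺ f = sup Ψ [0, f]` (Riesz–Kantorovich) is again linear and invariant, and `Ψ⁺ 1 ≥ 1`;
normalizing `Ψ⁺` gives an invariant mean.
-/

open scoped Pointwise lp ENNReal

namespace Linf

variable {S : Type v}

instance : PosSMulMono ℝ (Linf S) :=
  ⟨fun _ hr _ _ hfg s => mul_le_mul_of_nonneg_left (hfg s) hr⟩

def posPart (f : Linf S) : Linf S :=
  ⟨fun s => max ((f : S → ℝ) s) 0, by
    obtain ⟨C, hC⟩ := f.2
    exact ⟨C, fun s => by
      rw [abs_of_nonneg (le_max_right _ _)]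
      exact max_le ((le_abs_self _).trans (hC s)) ((abs_nonneg _).trans (hC s))⟩⟩

def negPart (f : Linf S) : Linf S := posPart (-f)

lemma posPart_nonneg (f : Linf S) : 0 ≤ posPart f := fun _ => le_max_right _ _

lemma negPart_nonneg (f : Linf S) : 0 ≤ negPart f := fun _ => le_max_right _ _

lemma posPart_sub_negPart (f : Linf S) : posPart f - negPart f = f :=
  Subtype.ext <| funext fun s => max_zero_sub_max_neg_zero_eq_self ((f : S → ℝ) s)

lemma Icc_zero_add_s16 {f g : Linf S} (hf : 0 ≤ f) (hg : 0 ≤ g) :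
    Set.Icc 0 (f + g) = Set.Icc 0 f + Set.Icc 0 g := by
  refine subset_antisymm ?_ ?_
  · rintro w ⟨hw0, hw⟩
    have hmin : ∃ C : ℝ, ∀ s, |min ((w : S → ℝ) s) ((f : S → ℝ) s)| ≤ C := by
      obtain ⟨C, hC⟩ := f.2
      exact ⟨C, fun s => by
        rw [abs_of_nonneg (le_min (hw0 s) (hf s))]
        exact (min_le_right _ _).trans ((le_abs_self _).trans (hC s))⟩
    let u : Linf S := ⟨fun s => min ((w : S → ℝ) s) ((f : S → ℝ) s), hmin⟩
    refine ⟨u, ⟨fun s => le_min (hw0 s) (hf s), fun s => min_le_right _ _⟩, w - u,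
      ⟨fun s => sub_nonneg.mpr (min_le_left _ _), fun s => ?_⟩, add_sub_cancel u w⟩
    have hws : (w : S → ℝ) s ≤ (f : S → ℝ) s + (g : S → ℝ) s := hw s
    have hgs : 0 ≤ (g : S → ℝ) s := hg s
    show (w : S → ℝ) s - min ((w : S → ℝ) s) ((f : S → ℝ) s) ≤ (g : S → ℝ) s
    rcases min_cases ((w : S → ℝ) s) ((f : S → ℝ) s) with ⟨h, _⟩ | ⟨h, _⟩ <;> linarith
  · rintro _ ⟨u, ⟨hu0, huf⟩, v, ⟨hv0, hvg⟩, rfl⟩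
    exact ⟨add_nonneg hu0 hv0, add_le_add huf hvg⟩

lemma Icc_zero_smul_s16 {r : ℝ} (hr : 0 < r) (f : Linf S) :
    Set.Icc 0 (r • f) = r • Set.Icc 0 f := by
  have hr' : 0 ≤ r⁻¹ := inv_nonneg.mpr hr.le
  refine subset_antisymm ?_ ?_
  · rintro v ⟨hv0, hvf⟩
    refine ⟨r⁻¹ • v, ⟨smul_nonneg hr' hv0, ?_⟩, smul_inv_smul₀ hr.ne' v⟩
    simpa [inv_smul_smul₀ hr.ne'] using smul_le_smul_of_nonneg_left hvf hr'
  · rintro _ ⟨u, ⟨hu0, huf⟩, rfl⟩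
    exact ⟨smul_nonneg hr.le hu0, smul_le_smul_of_nonneg_left huf hr.le⟩

lemma compL_image_Icc_zero (e : Equiv.Perm S) (f : Linf S) :
    compL e '' Set.Icc 0 f = Set.Icc 0 (compL e f) := by
  refine subset_antisymm ?_ ?_
  · rintro _ ⟨u, ⟨hu0, huf⟩, rfl⟩
    exact ⟨fun s => hu0 (e s), fun s => huf (e s)⟩
  · rintro v ⟨hv0, hvf⟩
    refine ⟨compL e.symm v, ⟨fun s => hv0 (e.symm s), fun s => ?_⟩, ?_⟩
    · simpa [compL] using hvf (e.symm s)
    · exact Subtype.ext <| funext fun s => by simp [compL]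

end Linf

section Positivization

variable {S : Type v}

noncomputable def coneSup (φ : Linf S →ₗ[ℝ] ℝ) (f : Linf S) : ℝ := sSup (φ '' Set.Icc 0 f)

variable {φ : Linf S →ₗ[ℝ] ℝ}

@[simp]
lemma coneSup_zero : coneSup φ 0 = 0 := by
  simp [coneSup]

lemma le_coneSup (hφ : ∀ f, BddAbove (φ '' Set.Icc 0 f)) {u f : Linf S}
    (hu : u ∈ Set.Icc 0 f) : φ u ≤ coneSup φ f :=
  le_csSup (hφ f) ⟨u, hu, rfl⟩

lemma coneSup_nonneg (hφ : ∀ f, BddAbove (φ '' Set.Icc 0 f)) {f : Linf S} (hf : 0 ≤ f) :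
    0 ≤ coneSup φ f :=
  (map_zero φ).symm.trans_le (le_coneSup hφ ⟨le_rfl, hf⟩)

lemma coneSup_add (hφ : ∀ f, BddAbove (φ '' Set.Icc 0 f)) {f g : Linf S} (hf : 0 ≤ f)
    (hg : 0 ≤ g) : coneSup φ (f + g) = coneSup φ f + coneSup φ g := by
  rw [coneSup, Linf.Icc_zero_add_s16 hf hg, Set.image_add φ]
  exact csSup_add ⟨_, 0, ⟨le_rfl, hf⟩, rfl⟩ (hφ f) ⟨_, 0, ⟨le_rfl, hg⟩, rfl⟩ (hφ g)

lemma coneSup_smul {r : ℝ} (hr : 0 ≤ r) (f : Linf S) :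
    coneSup φ (r • f) = r * coneSup φ f := by
  rcases hr.eq_or_lt with rfl | hr
  · simp
  · rw [coneSup, Linf.Icc_zero_smul_s16 hr, image_smul_set, Real.sSup_smul_of_nonneg hr.le, coneSup,
      smul_eq_mul]

lemma coneSup_compL {e : Equiv.Perm S} (he : ∀ f, φ (compL e f) = φ f) (f : Linf S) :
    coneSup φ (compL e f) = coneSup φ f := by
  rw [coneSup, ← Linf.compL_image_Icc_zero, Set.image_image, coneSup]
  simp only [he]

noncomputable def positivePartFun (φ : Linf S →ₗ[ℝ] ℝ) (f : Linf S) : ℝ :=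
  coneSup φ (Linf.posPart f) - coneSup φ (Linf.negPart f)

lemma positivePartFun_eq_sub (hφ : ∀ f, BddAbove (φ '' Set.Icc 0 f)) {f a b : Linf S}
    (ha : 0 ≤ a) (hb : 0 ≤ b) (h : f = a - b) :
    positivePartFun φ f = coneSup φ a - coneSup φ b := by
  have hsum : Linf.posPart f + b = Linf.negPart f + a := by
    linear_combination (norm := abel) (Linf.posPart_sub_negPart f).trans h
  have := congrArg (coneSup φ) hsum
  rw [coneSup_add hφ (Linf.posPart_nonneg f) hb, coneSup_add hφ (Linf.negPart_nonneg f) ha] at this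
  rw [positivePartFun]
  linarith

noncomputable def positivePart (φ : Linf S →ₗ[ℝ] ℝ) (hφ : ∀ f, BddAbove (φ '' Set.Icc 0 f)) :
    Linf S →ₗ[ℝ] ℝ where
  toFun := positivePartFun φ
  map_add' f g := by
    rw [positivePartFun_eq_sub hφ (add_nonneg (Linf.posPart_nonneg f) (Linf.posPart_nonneg g))
        (add_nonneg (Linf.negPart_nonneg f) (Linf.negPart_nonneg g)),
      coneSup_add hφ (Linf.posPart_nonneg f) (Linf.posPart_nonneg g),
      coneSup_add hφ (Linf.negPart_nonneg f) (Linf.negPart_nonneg g), positivePartFun,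
      positivePartFun]
    · ring
    · linear_combination (norm := abel)
        -(Linf.posPart_sub_negPart f) - (Linf.posPart_sub_negPart g)
  map_smul' r f := by
    rcases le_total 0 r with hr | hr
    · rw [positivePartFun_eq_sub hφ (smul_nonneg hr (Linf.posPart_nonneg f))
          (smul_nonneg hr (Linf.negPart_nonneg f)) (by rw [← smul_sub, Linf.posPart_sub_negPart]),
        coneSup_smul hr, coneSup_smul hr, RingHom.id_apply, smul_eq_mul, positivePartFun]
      ring
    · rw [positivePartFun_eq_sub hφ (smul_nonneg (neg_nonneg.mpr hr) (Linf.negPart_nonneg f))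
          (smul_nonneg (neg_nonneg.mpr hr) (Linf.posPart_nonneg f)),
        coneSup_smul (neg_nonneg.mpr hr), coneSup_smul (neg_nonneg.mpr hr), RingHom.id_apply,
        smul_eq_mul, positivePartFun]
      · ring
      · linear_combination (norm := module) (-r) • Linf.posPart_sub_negPart f

lemma positivePart_of_nonneg (hφ : ∀ f, BddAbove (φ '' Set.Icc 0 f)) {f : Linf S} (hf : 0 ≤ f) :
    positivePart φ hφ f = coneSup φ f :=
  (positivePartFun_eq_sub hφ hf le_rfl (sub_zero f).symm).trans <| by
    rw [coneSup_zero, sub_zero]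

lemma positivePart_compL (hφ : ∀ f, BddAbove (φ '' Set.Icc 0 f)) {e : Equiv.Perm S}
    (he : ∀ f, φ (compL e f) = φ f) (f : Linf S) :
    positivePart φ hφ (compL e f) = positivePart φ hφ f := by
  change coneSup φ (compL e (Linf.posPart f)) - coneSup φ (compL e (Linf.negPart f)) = _
  rw [coneSup_compL he, coneSup_compL he]
  rfl

theorem invariantMean_of_bddAbove [MulAction G S] (φ : Linf S →ₗ[ℝ] ℝ)
    (hφ : ∀ f, BddAbove (φ '' Set.Icc 0 f)) (h1 : φ (constLinf S 1) = 1)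
    (hinv : ∀ (g : G) (f : Linf S), φ (compL (fun s => g⁻¹ • s) f) = φ f) :
    InvariantMean G S := by
  have hone : (0 : Linf S) ≤ constLinf S 1 := fun _ => zero_le_one
  have hpos : 0 < coneSup φ (constLinf S 1) :=
    calc 0 < φ (constLinf S 1) := by rw [h1]; exact one_pos
      _ ≤ coneSup φ (constLinf S 1) := le_coneSup hφ ⟨hone, le_rfl⟩
  refine ⟨(coneSup φ (constLinf S 1))⁻¹ • positivePart φ hφ, ?_, fun f hf => ?_, fun g f => ?_⟩
  · rw [LinearMap.smul_apply, positivePart_of_nonneg hφ hone, smul_eq_mul,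
      inv_mul_cancel₀ hpos.ne']
  · rw [LinearMap.smul_apply, positivePart_of_nonneg hφ hf]
    exact smul_nonneg (inv_nonneg.mpr hpos.le) (coneSup_nonneg hφ hf)
  · rw [LinearMap.smul_apply, LinearMap.smul_apply]
    exact congrArg _ (positivePart_compL hφ (e := MulAction.toPerm g⁻¹) (hinv g) f)

end Positivization

lemma abs_mean_apply_le {S : Type v} {m : Linf S →ₗ[ℝ] ℝ} (h1 : m (constLinf S 1) = 1)
    (hpos : ∀ f : Linf S, (∀ s, 0 ≤ (f : S → ℝ) s) → 0 ≤ m f) {f : Linf S} {C : ℝ}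
    (hC : ∀ s, |(f : S → ℝ) s| ≤ C) : |m f| ≤ C := by
  have hm : ∀ ε : ℝ, ε = 1 ∨ ε = -1 → 0 ≤ C - ε * m f := fun ε hε => by
    have := hpos (C • constLinf S 1 - ε • f) fun s => by
      show 0 ≤ C * 1 - ε * (f : S → ℝ) s
      rcases hε with rfl | rfl <;> linarith [abs_le.mp (hC s)]
    rwa [map_sub, map_smul, map_smul, h1, smul_eq_mul, smul_eq_mul, mul_one] at this
  exact abs_le.mpr ⟨by linarith [hm (-1) (.inr rfl)], by linarith [hm 1 (.inl rfl)]⟩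

lemma Cos.induction_on {F : Set (Subgroup G)} {P : Cos G F → Prop} (x : Cos G F)
    (mk : ∀ (H : F) (g : G), P ⟨H, g⟩) : P x := by
  obtain ⟨H, q⟩ := x
  induction q using QuotientGroup.induction_on
  exact mk _ _

lemma Cos.smul_mk_one {F : Set (Subgroup G)} {H : F} {h : G} (hh : h ∈ (H : Subgroup G)) :
    h • (⟨H, ((1 : G) : G ⧸ (H : Subgroup G))⟩ : Cos G F) =
      ⟨H, ((1 : G) : G ⧸ (H : Subgroup G))⟩ :=
  Sigma.ext rfl <| heq_of_eq <| QuotientGroup.eq.mpr <| by simpa using inv_mem hh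

section Averaging

variable {F : Set (Subgroup G)} {B : Type*} [NormedAddCommGroup B] [NormedSpace ℝ B]
  [DistribMulAction G B]

def cosetFun (τ : F → B →L[ℝ] ℝ)
    (hτ : ∀ (H : F), ∀ h ∈ (H : Subgroup G), ∀ b, τ H (h • b) = τ H b) (b : B) :
    Cos G F → ℝ
  | ⟨H, q⟩ => Quotient.liftOn' q (fun g => τ H (g⁻¹ • b)) fun g g' hgg' => by
      have hmem : (g⁻¹ * g')⁻¹ ∈ (H : Subgroup G) :=
        inv_mem (QuotientGroup.leftRel_apply.mp hgg')
      rw [← hτ H _ hmem, ← mul_smul, mul_inv_rev, inv_inv, mul_inv_cancel_right]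

variable {τ : F → B →L[ℝ] ℝ} {hτ : ∀ (H : F), ∀ h ∈ (H : Subgroup G), ∀ b, τ H (h • b) = τ H b}

@[simp]
lemma cosetFun_mk (b : B) (H : F) (g : G) :
    cosetFun τ hτ b ⟨H, (g : G ⧸ (H : Subgroup G))⟩ = τ H (g⁻¹ • b) := rfl

theorem exists_invariant_functional_of_invariantMean (hm : InvariantMean G (Cos G F))
    [SMulCommClass G ℝ B] (hB : ∀ (g : G) (b : B), ‖g • b‖ = ‖b‖) (τ : F → B →L[ℝ] ℝ)
    (hτ : ∀ (H : F), ∀ h ∈ (H : Subgroup G), ∀ b, τ H (h • b) = τ H b)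
    {C : ℝ} (hC : ∀ H, ‖τ H‖ ≤ C) :
    ∃ Ψ : B →L[ℝ] ℝ, (∀ (g : G) (b : B), Ψ (g • b) = Ψ b) ∧
      ∀ (b : B) (c : ℝ), (∀ (H : F) (g : G), τ H (g • b) = c) → Ψ b = c := by
  obtain ⟨m, h1, hpos, hinv⟩ := hm
  have hbound (b : B) (x : Cos G F) : |cosetFun τ hτ b x| ≤ C * ‖b‖ := by
    induction x using Cos.induction_on with
    | mk H g =>
      rw [cosetFun_mk, ← Real.norm_eq_abs, ← hB g⁻¹ b]
      exact (τ H).le_opNorm _ |>.trans (mul_le_mul_of_nonneg_right (hC H) (norm_nonneg _))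
  let T : B →ₗ[ℝ] Linf (Cos G F) :=
    { toFun b := ⟨cosetFun τ hτ b, C * ‖b‖, hbound b⟩
      map_add' b b' := Subtype.ext <| funext fun x => by
        induction x using Cos.induction_on with
        | mk H g => simp [smul_add]
      map_smul' r b := Subtype.ext <| funext fun x => by
        induction x using Cos.induction_on with
        | mk H g => simp [smul_comm g⁻¹ r b] }
  refine ⟨(m ∘ₗ T).mkContinuous C fun b => abs_mean_apply_le h1 hpos (hbound b),
    fun g b => ?_, fun b c hc => ?_⟩
  · have hT : T (g • b) = compL (fun x => g⁻¹ • x) (T b) := Subtype.ext <| funext fun x => by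
      induction x using Cos.induction_on with
      | mk H k =>
        show τ H (k⁻¹ • g • b) = τ H ((g⁻¹ * k)⁻¹ • b)
        rw [mul_inv_rev, inv_inv, mul_smul]
    simp only [LinearMap.mkContinuous_apply, LinearMap.comp_apply, hT, hinv]
  · have hT : T b = c • constLinf (Cos G F) 1 := Subtype.ext <| funext fun x => by
      induction x using Cos.induction_on with
      | mk H g => simp [T, constLinf, hc]
    simp only [LinearMap.mkContinuous_apply, LinearMap.comp_apply, hT, map_smul, h1,
      smul_eq_mul, mul_one]

end Averaging

section BoundedFunctions

variable {S T : Type*}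

noncomputable def lpComap (p : S → T) : ℓ^∞(T, ℝ) →L[ℝ] ℓ^∞(S, ℝ) :=
  LinearMap.mkContinuous
    { toFun f := ⟨fun s => f (p s), memℓp_infty ⟨‖f‖, by
        rintro _ ⟨s, rfl⟩
        exact lp.norm_apply_le_norm ENNReal.top_ne_zero f (p s)⟩⟩
      map_add' _ _ := rfl
      map_smul' _ _ := rfl }
    1 fun f => by
      rw [one_mul]
      exact lp.norm_le_of_forall_le (norm_nonneg f) fun s =>
        lp.norm_apply_le_norm ENNReal.top_ne_zero f (p s)

@[simp]
lemma lpComap_apply (p : S → T) (f : ℓ^∞(T, ℝ)) (s : S) : lpComap p f s = f (p s) := rfl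

lemma norm_lpComap_le (p : S → T) : ‖lpComap p‖ ≤ 1 :=
  LinearMap.mkContinuous_norm_le _ zero_le_one _

noncomputable def Linf.toLp : Linf S →ₗ[ℝ] ℓ^∞(S, ℝ) where
  toFun f := ⟨fun s => (f : S → ℝ) s, memℓp_infty <| by
    obtain ⟨C, hC⟩ := f.2
    exact ⟨C, by rintro _ ⟨s, rfl⟩; exact hC s⟩⟩
  map_add' _ _ := rfl
  map_smul' _ _ := rfl

lemma Linf.norm_toLp_le_of_mem_Icc_zero {u f : Linf S} (hu : u ∈ Set.Icc 0 f) :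
    ‖Linf.toLp u‖ ≤ ‖Linf.toLp f‖ :=
  lp.norm_le_of_forall_le (norm_nonneg _) fun s => by
    refine (abs_of_nonneg (hu.1 s)).trans_le ((hu.2 s).trans ?_)
    exact (le_abs_self _).trans (lp.norm_apply_le_norm ENNReal.top_ne_zero (Linf.toLp f) s)

variable [MulAction G S]

noncomputable instance : SMul G ℓ^∞(S, ℝ) := ⟨fun g => lpComap fun s => g⁻¹ • s⟩

@[simp]
lemma lp_smul_apply (g : G) (f : ℓ^∞(S, ℝ)) (s : S) : (g • f) s = f (g⁻¹ • s) := rfl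

noncomputable instance : DistribMulAction G ℓ^∞(S, ℝ) where
  one_smul f := lp.ext <| funext fun s => by simp
  mul_smul g h f := lp.ext <| funext fun s => by simp [mul_smul]
  smul_zero _ := map_zero (lpComap _)
  smul_add _ := map_add (lpComap _)

instance : SMulCommClass G ℝ ℓ^∞(S, ℝ) := ⟨fun _ _ _ => map_smul (lpComap _) _ _⟩

lemma norm_lp_smul (g : G) (f : ℓ^∞(S, ℝ)) : ‖g • f‖ = ‖f‖ := by
  have hle (g : G) (f : ℓ^∞(S, ℝ)) : ‖g • f‖ ≤ ‖f‖ :=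
    (lpComap _).le_of_opNorm_le (norm_lpComap_le _) f |>.trans_eq (one_mul _)
  refine (hle g f).antisymm ?_
  calc ‖f‖ = ‖g⁻¹ • g • f‖ := by rw [inv_smul_smul]
    _ ≤ ‖g • f‖ := hle _ _

lemma lpComap_smul [MulAction G T] {p : S → T} {g : G} (hp : ∀ s, p (g • s) = g • p s)
    (f : ℓ^∞(T, ℝ)) :
    lpComap p (g • f) = g • lpComap p f :=
  lp.ext <| funext fun s => by
    have hp' : p (g⁻¹ • s) = g⁻¹ • p s := by rw [eq_inv_smul_iff, ← hp, smul_inv_smul]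
    simp [hp']

lemma Linf.toLp_compL_smul (g : G) (f : Linf S) :
    Linf.toLp (compL (fun s => g⁻¹ • s) f) = g • Linf.toLp f := rfl

theorem invariantMean_of_invariant_lp_functional (Ψ : ℓ^∞(S, ℝ) →L[ℝ] ℝ)
    (hΨ : ∀ (g : G) f, Ψ (g • f) = Ψ f) (h1 : Ψ (Linf.toLp (constLinf S 1)) = 1) :
    InvariantMean G S := by
  refine invariantMean_of_bddAbove ((Ψ : ℓ^∞(S, ℝ) →ₗ[ℝ] ℝ) ∘ₗ Linf.toLp) (fun f => ?_) h1
    fun g f => by rw [LinearMap.comp_apply, Linf.toLp_compL_smul]; exact hΨ g _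
  refine ⟨‖Ψ‖ * ‖Linf.toLp f‖, ?_⟩
  rintro _ ⟨u, ⟨hu0, huf⟩, rfl⟩
  refine (le_abs_self _).trans <| (Ψ.le_opNorm _).trans ?_
  exact mul_le_mul_of_nonneg_left (Linf.norm_toLp_le_of_mem_Icc_zero ⟨hu0, huf⟩) (norm_nonneg Ψ)

end BoundedFunctions

theorem relatively_amenable_iff_trivial_module_relatively_injective_general
    (G : Type u) [Group G] (F : Set (Subgroup G)) :
    InvariantMean G (Cos G F) ↔
      ∀ (A B : Type u)
        [NormedAddCommGroup A] [NormedSpace ℝ A] [DistribMulAction G A]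
        [SMulCommClass G ℝ A]
        [NormedAddCommGroup B] [NormedSpace ℝ B] [DistribMulAction G B]
        [SMulCommClass G ℝ B],
        (∀ (g : G) (a : A), ‖g • a‖ = ‖a‖) → (∀ (g : G) (b : B), ‖g • b‖ = ‖b‖) →
        ∀ i : A →L[ℝ] B, (∀ (g : G) (a : A), i (g • a) = g • i a) →
        (∃ K : ℝ, 0 ≤ K ∧ ∀ H ∈ F, ∃ σ : B →L[ℝ] A,
          ‖σ‖ ≤ K ∧ (∀ h : G, h ∈ H → ∀ b, σ (h • b) = h • σ b) ∧ ∀ a, σ (i a) = a) →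
        ∀ ψ : A →L[ℝ] ℝ, (∀ (g : G) (a : A), ψ (g • a) = ψ a) →
        ∃ Ψ : B →L[ℝ] ℝ, (∀ (g : G) (b : B), Ψ (g • b) = Ψ b) ∧ ∀ a, Ψ (i a) = ψ a := by
  constructor
  · rintro hm A B _ _ _ _ _ _ _ _ - hB i hi ⟨K, -, hσ⟩ ψ hψ
    choose σ hσK hσH hσi using hσ
    obtain ⟨Ψ, hΨ, hΨc⟩ := exists_invariant_functional_of_invariantMean hm hB
      (fun H => ψ ∘L σ H H.2) (fun H h hh b => by simp [hσH H H.2 h hh, hψ])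
      (C := ‖ψ‖ * K) fun H => (ψ.opNorm_comp_le _).trans (by gcongr; exact hσK H H.2)
    exact ⟨Ψ, hΨ, fun a => hΨc _ _ fun H g => by simp [← hi, hσi, hψ]⟩
  · intro hinj
    obtain ⟨Ψ, hΨ, hΨi⟩ := hinj ℓ^∞(PUnit, ℝ) ℓ^∞(Cos G F, ℝ) norm_lp_smul norm_lp_smul
      (lpComap fun _ => PUnit.unit) (fun _ => lpComap_smul fun _ => rfl)
      ⟨1, zero_le_one, fun H hH => ⟨lpComap fun _ => ⟨⟨H, hH⟩, ((1 : G) : G ⧸ H)⟩,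
        norm_lpComap_le _, fun _ hh => lpComap_smul fun _ => (Cos.smul_mk_one hh).symm,
        fun _ => rfl⟩⟩
      (lp.evalCLM ℝ _ ∞ PUnit.unit) fun _ _ => rfl
    exact invariantMean_of_invariant_lp_functional Ψ hΨ (hΨi (Linf.toLp (constLinf PUnit 1)))

/-- Proposition 4.9, (i) ⇔ (iii).  `G` is amenable relative to
the family `F` (the `G`-set `G/F` admits a `G`-invariant mean) if and only if the
trivial normed `ℝG`-module `ℝ` is relatively `F`-injective. -/
theorem relatively_amenable_iff_trivial_module_relatively_injective
    (G : Type u) [Group G] (F : Set (Subgroup G)) (hF : IsFamily F) :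
    InvariantMean G (Cos G F) ↔
      ∀ (A B : Type u)
        [NormedAddCommGroup A] [NormedSpace ℝ A] [DistribMulAction G A]
        [SMulCommClass G ℝ A]
        [NormedAddCommGroup B] [NormedSpace ℝ B] [DistribMulAction G B]
        [SMulCommClass G ℝ B],
        (∀ (g : G) (a : A), ‖g • a‖ = ‖a‖) → (∀ (g : G) (b : B), ‖g • b‖ = ‖b‖) →
        ∀ i : A →L[ℝ] B, (∀ (g : G) (a : A), i (g • a) = g • i a) →
        (∃ K : ℝ, 0 ≤ K ∧ ∀ H ∈ F, ∃ σ : B →L[ℝ] A,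
          ‖σ‖ ≤ K ∧ (∀ h : G, h ∈ H → ∀ b, σ (h • b) = h • σ b) ∧ ∀ a, σ (i a) = a) →
        ∀ ψ : A →L[ℝ] ℝ, (∀ (g : G) (a : A), ψ (g • a) = ψ a) →
        ∃ Ψ : B →L[ℝ] ℝ, (∀ (g : G) (b : B), Ψ (g • b) = Ψ b) ∧ ∀ a, Ψ (i a) = ψ a :=
  relatively_amenable_iff_trivial_module_relatively_injective_general G F

end RelBdd
end

section
/- Let G be a group, N a normal subgroup of G, F = F⟨N⟩ the family of all subgroups of N, and V a normed ℝG-module. The coset space G/N is a G-subset of G/F, and since N acts trivially on G/N, every G-equivariant function (G/N)^{n+1} → V takes values in the N-fixed subspace V^N and factors through the quotient group G/N; thus the complex of bounded G-equivariant V-valued cochains on (G/N)^{•+1} is isomorphic to the complex of bounded (G/N)-equivariant V^N-valued cochains computing the ordinary bounded cohomology H^•_b(G/N; V^N). Moreover, for every n ≥ 0 the restriction map along the inclusion (G/N)^{n+1} ⊆ (G/F)^{n+1} induces an isomorphism on cohomology. Hence H^n_{F⟨N⟩,b}(G;V) ≅ H^n_b(G/N; V^N) for all n ≥ 0. -/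
open scoped BigOperators

universe u v w

namespace RelBdd

variable {G : Type u} [Group G]

/-- For a normal subgroup `N` of `G`, the inclusion of the `G`-set `G/N` into
`G/F⟨N⟩`, where `F⟨N⟩ = {K | K ≤ N}` is the family generated by `N`. -/
def quotEmb {G : Type u} [Group G] (N : Subgroup G) :
    G ⧸ N → Cos G {K : Subgroup G | K ≤ N} :=
  fun q => ⟨⟨N, Set.mem_setOf_eq ▸ le_rfl⟩, q⟩

/-!
The coset space `G/N` sits in `G/F⟨N⟩` via `i`, and `gH ↦ gN` is a `G`-equivariant retraction
`p : G/F⟨N⟩ → G/N` (every `H ∈ F⟨N⟩` lies in `N`). Pulling back along `p` splits restriction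
along `i` on bounded equivariant cochains, and `i ∘ p` is equivariantly homotopic to the identity
through the prism operator
`h c (x₀, …, xₙ) = ∑ₖ (-1)ᵏ c (x₀, …, xₖ, ip xₖ, …, ip xₙ)`,
which preserves boundedness and equivariance and satisfies `δh + hδ = (ip)^* - id`.
Hence restriction is bijective on cohomology. Since `N` acts trivially on `G/N`, equivariant
cochains on `(G/N)^{•+1}` take values in `V^N`.
-/

open Finset

def pullback {ι S T V : Type*} (φ : S → T) (f : (ι → T) → V) : (ι → S) → V :=
  fun x => f (fun j => φ (x j))

def IsEquivariant (G : Type*) {ι S V : Type*} [SMul G S] [SMul G V] (f : (ι → S) → V) :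
    Prop :=
  ∀ (g : G) (x : ι → S), f (fun j => g • x j) = g • f x

section PrismHomotopy

variable {S V : Type*} [AddCommGroup V] [Module ℝ V]

-- Faces and prisms are indexed by `ℕ` rather than `Fin`, so that the simplicial identities
-- between them reduce to `omega`.
def face (n i : ℕ) (x : Fin (n + 2) → S) : Fin (n + 1) → S :=
  fun j => if (j : ℕ) < i then x j.castSucc else x j.succ

lemma delta_apply_eq_sum_face (n : ℕ) (f : (Fin (n + 1) → S) → V) (x : Fin (n + 2) → S) :
    delta n f x = ∑ i ∈ range (n + 2), (-1 : ℝ) ^ i • f (face n i x) := by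
  rw [delta, ← Fin.sum_univ_eq_sum_range (fun i => (-1 : ℝ) ^ i • f (face n i x))]
  refine sum_congr rfl fun i _ => ?_
  congr 2
  funext j
  simp only [face, Fin.succAbove, Fin.lt_def, Fin.val_castSucc, apply_ite x]

-- `prism α β n i x = (α x₀, …, α xᵢ, β xᵢ, …, β xₙ)`; the `min` only matters when `i > n`.
def prism (α β : S → S) (n i : ℕ) (x : Fin (n + 1) → S) : Fin (n + 2) → S :=
  fun j => if (j : ℕ) ≤ i then α (x ⟨min j n, by omega⟩) else β (x ⟨j - 1, by omega⟩)

def prismHomotopy (α β : S → S) (n : ℕ) (c : (Fin (n + 2) → S) → V) :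
    (Fin (n + 1) → S) → V :=
  fun x => ∑ i ∈ range (n + 1), (-1 : ℝ) ^ i • c (prism α β n i x)

section FacePrism

variable (α β : S → S) {n : ℕ} (x : Fin (n + 2) → S)

lemma face_prism_self (i : ℕ) :
    face (n + 1) i (prism α β (n + 1) i x) =
      fun j : Fin (n + 2) => if (j : ℕ) < i then α (x j) else β (x j) := by
  funext j
  simp only [face, prism, Fin.val_castSucc, Fin.val_succ]
  split_ifs <;> first | omega | (congr 3 <;> simp <;> omega)

lemma face_succ_prism_self (i : ℕ) :
    face (n + 1) (i + 1) (prism α β (n + 1) i x) =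
      fun j : Fin (n + 2) => if (j : ℕ) < i + 1 then α (x j) else β (x j) := by
  funext j
  simp only [face, prism, Fin.val_castSucc, Fin.val_succ]
  split_ifs <;> first | omega | (congr 3 <;> simp <;> omega)

lemma face_prism_of_lt {i j : ℕ} (hj : j < i) (hi : i ≤ n + 1) :
    face (n + 1) j (prism α β (n + 1) i x) = prism α β n (i - 1) (face n j x) := by
  funext m
  simp only [face, prism, Fin.val_castSucc, Fin.val_succ]
  split_ifs <;> first | omega | (congr 3; simp <;> omega)

lemma face_prism_of_add_two_le {i j : ℕ} (hij : i + 2 ≤ j) (hj : j ≤ n + 2) :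
    face (n + 1) j (prism α β (n + 1) i x) = prism α β n i (face n (j - 1) x) := by
  funext m
  simp only [face, prism, Fin.val_castSucc, Fin.val_succ]
  split_ifs <;> first | omega | (congr 3 <;> simp <;> omega)

end FacePrism

section Sums

variable (α β : S → S) {n : ℕ} (c : (Fin (n + 2) → S) → V) (x : Fin (n + 2) → S)

lemma delta_prismHomotopy_apply :
    delta n (prismHomotopy α β n c) x =
      ∑ p ∈ range (n + 2) ×ˢ range (n + 1),
        (-1 : ℝ) ^ (p.1 + p.2) • c (prism α β n p.2 (face n p.1 x)) := by
  simp only [delta_apply_eq_sum_face, prismHomotopy, sum_product, smul_sum, smul_smul, pow_add]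

lemma prismHomotopy_delta_apply :
    prismHomotopy α β (n + 1) (delta (n + 1) c) x =
      ∑ p ∈ range (n + 2) ×ˢ range (n + 3),
        (-1 : ℝ) ^ (p.1 + p.2) • c (face (n + 1) p.2 (prism α β (n + 1) p.1 x)) := by
  simp only [delta_apply_eq_sum_face, prismHomotopy, sum_product, smul_sum, smul_smul, pow_add]

lemma neg_one_pow_succ_smul (k : ℕ) (v : V) : (-1 : ℝ) ^ (k + 1) • v = -((-1 : ℝ) ^ k • v) := by
  rw [pow_succ, mul_neg_one, neg_smul]

lemma sum_face_prism_of_lt :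
    ∑ p ∈ (range (n + 2) ×ˢ range (n + 3)).filter (fun p => p.2 < p.1),
        (-1 : ℝ) ^ (p.1 + p.2) • c (face (n + 1) p.2 (prism α β (n + 1) p.1 x)) =
      -∑ p ∈ (range (n + 2) ×ˢ range (n + 1)).filter (fun p => p.1 ≤ p.2),
        (-1 : ℝ) ^ (p.1 + p.2) • c (prism α β n p.2 (face n p.1 x)) := by
  rw [← sum_neg_distrib]
  refine sum_nbij' (fun p => (p.2, p.1 - 1)) (fun p => (p.2 + 1, p.1)) ?_ ?_ ?_ ?_ ?_ <;>
    simp only [mem_filter, mem_product, mem_range, Prod.forall, Prod.mk.injEq, and_true, true_and]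
  · omega
  · omega
  · omega
  · omega
  · rintro i j ⟨⟨hi, -⟩, hji⟩
    rw [face_prism_of_lt α β x hji (by omega), show i + j = j + (i - 1) + 1 by omega,
      neg_one_pow_succ_smul]

lemma sum_face_prism_of_add_two_le :
    ∑ p ∈ (range (n + 2) ×ˢ range (n + 3)).filter (fun p => p.1 + 2 ≤ p.2),
        (-1 : ℝ) ^ (p.1 + p.2) • c (face (n + 1) p.2 (prism α β (n + 1) p.1 x)) =
      -∑ p ∈ (range (n + 2) ×ˢ range (n + 1)).filter (fun p => ¬p.1 ≤ p.2),
        (-1 : ℝ) ^ (p.1 + p.2) • c (prism α β n p.2 (face n p.1 x)) := by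
  rw [← sum_neg_distrib]
  refine sum_nbij' (fun p => (p.2 - 1, p.1)) (fun p => (p.2, p.1 + 1)) ?_ ?_ ?_ ?_ ?_ <;>
    simp only [mem_filter, mem_product, mem_range, Prod.forall, Prod.mk.injEq, and_true, true_and]
  · omega
  · omega
  · omega
  · omega
  · rintro i j ⟨⟨-, hj⟩, hij⟩
    rw [face_prism_of_add_two_le α β x hij (by omega), show i + j = j - 1 + i + 1 by omega,
      neg_one_pow_succ_smul]

lemma sum_face_prism_diagonal :
    ∑ p ∈ (range (n + 2) ×ˢ range (n + 3)).filter (fun p => p.1 ≤ p.2 ∧ p.2 ≤ p.1 + 1),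
        (-1 : ℝ) ^ (p.1 + p.2) • c (face (n + 1) p.2 (prism α β (n + 1) p.1 x)) =
      pullback β c x - pullback α c x := by
  set D : ℕ → V := fun t => c (fun j : Fin (n + 2) => if (j : ℕ) < t then α (x j) else β (x j))
  have hD0 : D 0 = pullback β c x := by simp [D, pullback]
  have hD : D (n + 2) = pullback α c x := by simp [D, pullback]
  rw [← hD0, ← hD, ← sum_range_sub' D,
    sum_finset_product _ (range (n + 2)) (fun i => {i, i + 1}) (fun p => by
      simp only [mem_filter, mem_product, mem_range, mem_insert, mem_singleton]; omega)]
  refine sum_congr rfl fun i _ => ?_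
  rw [sum_pair (by omega)]
  dsimp only
  rw [face_prism_self, face_succ_prism_self, Even.neg_one_pow ⟨i, rfl⟩,
    Odd.neg_one_pow ⟨i, by ring⟩, one_smul, neg_one_smul, ← sub_eq_add_neg]

theorem delta_prismHomotopy_add_prismHomotopy_delta :
    delta n (prismHomotopy α β n c) + prismHomotopy α β (n + 1) (delta (n + 1) c) =
      pullback β c - pullback α c := by
  funext x
  -- Off the diagonal `i ≤ j ≤ i + 1`, the faces of prisms are prisms of faces and cancel
  -- against `δh`; the diagonal terms telescope.
  set Q := range (n + 2) ×ˢ range (n + 3)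
  have hQ : Q.filter (fun p => ¬p.2 < p.1) =
      (Q.filter fun p => p.1 + 2 ≤ p.2) ∪ Q.filter fun p => p.1 ≤ p.2 ∧ p.2 ≤ p.1 + 1 := by
    rw [← filter_or]
    exact filter_congr fun p _ => by omega
  rw [Pi.add_apply, Pi.sub_apply, delta_prismHomotopy_apply, prismHomotopy_delta_apply,
    ← sum_filter_add_sum_filter_not _ (fun p => p.1 ≤ p.2),
    ← sum_filter_add_sum_filter_not Q (fun p => p.2 < p.1), hQ,
    sum_union (disjoint_filter.2 fun p _ _ => by omega), sum_face_prism_of_lt,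
    sum_face_prism_of_add_two_le, sum_face_prism_diagonal]
  abel

end Sums

end PrismHomotopy


section Cochains

variable {S T V : Type*}

theorem delta_pullback [AddCommGroup V] [Module ℝ V] (φ : S → T) (n : ℕ)
    (f : (Fin (n + 1) → T) → V) : delta n (pullback φ f) = pullback φ (delta n f) := rfl

theorem delta_sub [AddCommGroup V] [Module ℝ V] (n : ℕ) (f f' : (Fin (n + 1) → S) → V) :
    delta n (f - f') = delta n f - delta n f' := by
  funext x
  simp only [delta, Pi.sub_apply, smul_sub, sum_sub_distrib]

theorem prismHomotopy_zero [AddCommGroup V] [Module ℝ V] (α β : S → S) (n : ℕ) :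
    prismHomotopy α β n (0 : (Fin (n + 2) → S) → V) = 0 := by
  funext x
  simp only [prismHomotopy, Pi.zero_apply, smul_zero, sum_const_zero]

theorem pullback_eq_self_of_delta_eq_zero [AddCommGroup V] [Module ℝ V] (φ : S → S)
    {c : (Fin 1 → S) → V} (hc : delta 0 c = 0) : pullback φ c = c := by
  funext x
  have e0 : (fun j => ![x 0, φ (x 0)] ((0 : Fin 2).succAbove j)) = fun j => φ (x j) := by
    funext j; fin_cases j; rfl
  have e1 : (fun j => ![x 0, φ (x 0)] ((1 : Fin 2).succAbove j)) = x := by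
    funext j; fin_cases j; rfl
  have h := congrFun hc ![x 0, φ (x 0)]
  rw [delta, Fin.sum_univ_two, e0, e1] at h
  simpa [pullback, ← sub_eq_add_neg, sub_eq_zero] using h

theorem Bdd.pullback {ι : Type*} [Norm V] {f : (ι → T) → V} (hf : Bdd f) (φ : S → T) :
    Bdd (pullback φ f) :=
  let ⟨C, hC⟩ := hf
  ⟨C, fun _ => hC _⟩

theorem Bdd.sub {α : Type*} [SeminormedAddCommGroup V] {f g : α → V} (hf : Bdd f)
    (hg : Bdd g) : Bdd (f - g) :=
  let ⟨C, hC⟩ := hf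
  let ⟨D, hD⟩ := hg
  ⟨C + D, fun x => (norm_sub_le _ _).trans (add_le_add (hC x) (hD x))⟩

theorem Bdd.prismHomotopy [SeminormedAddCommGroup V] [NormedSpace ℝ V] (α β : S → S) {n : ℕ}
    {c : (Fin (n + 2) → S) → V} (hc : Bdd c) : Bdd (RelBdd.prismHomotopy α β n c) := by
  obtain ⟨C, hC⟩ := hc
  refine ⟨(n + 1) * C, fun x => ?_⟩
  calc ‖RelBdd.prismHomotopy α β n c x‖
      ≤ ∑ i ∈ range (n + 1), ‖(-1 : ℝ) ^ i • c (prism α β n i x)‖ := norm_sum_le _ _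
    _ ≤ ∑ _i ∈ range (n + 1), C := sum_le_sum fun i _ => by simpa [norm_smul] using hC _
    _ = (n + 1) * C := by simp

end Cochains

section Equivariance

variable {M S T V : Type*} [Monoid M] [SMul M S] [SMul M T] [AddCommGroup V]
  [DistribMulAction M V]

theorem IsEquivariant.smul_eq_self {ι : Type*} {f : (ι → S) → V} (hf : IsEquivariant M f)
    {u : M} (hu : ∀ s : S, u • s = s) (x : ι → S) : u • f x = f x := by
  rw [← hf u x]
  simp only [hu]

theorem IsEquivariant.pullback {ι : Type*} {f : (ι → T) → V} (hf : IsEquivariant M f)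
    (φ : S →[M] T) : IsEquivariant M (pullback φ f) := fun g x => by
  simp only [RelBdd.pullback, map_smul, hf g]

theorem IsEquivariant.sub {ι : Type*} {f f' : (ι → S) → V} (hf : IsEquivariant M f)
    (hf' : IsEquivariant M f') : IsEquivariant M (f - f') := fun g x => by
  simp only [Pi.sub_apply, hf g, hf' g, smul_sub]

theorem IsEquivariant.prismHomotopy [Module ℝ V] [SMulCommClass M ℝ V] (α β : S →[M] S)
    {n : ℕ} {c : (Fin (n + 2) → S) → V} (hc : IsEquivariant M c) :
    IsEquivariant M (RelBdd.prismHomotopy α β n c) := fun g x => by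
  have hprism (i : ℕ) : prism α β n i (fun j => g • x j) = fun j => g • prism α β n i x j := by
    funext j
    simp only [prism]
    split_ifs <;> simp only [map_smul]
  simp only [RelBdd.prismHomotopy, hprism, hc g, smul_sum, smul_comm g]

end Equivariance

section Retraction

variable {M X Y V : Type*} [Monoid M] [SMul M X] [SMul M Y]
  [SeminormedAddCommGroup V] [NormedSpace ℝ V] [DistribMulAction M V]
  {i : Y →[M] X} {p : X →[M] Y}

theorem exists_cocycle_pullback_eq (hpi : Function.LeftInverse p i) {n : ℕ}
    {f : (Fin (n + 1) → Y) → V} (hf : Bdd f) (hfM : IsEquivariant M f) (hδf : delta n f = 0) :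
    ∃ c : (Fin (n + 1) → X) → V,
      Bdd c ∧ IsEquivariant M c ∧ delta n c = 0 ∧ pullback i c = f := by
  refine ⟨pullback p f, hf.pullback p, hfM.pullback p, by rw [delta_pullback, hδf]; rfl, ?_⟩
  funext x
  simp only [pullback, hpi _]

theorem exists_eq_delta_of_pullback_eq_delta [SMulCommClass M ℝ V] (p : X →[M] Y) {n : ℕ}
    {c : (Fin (n + 2) → X) → V} (hc : Bdd c) (hcM : IsEquivariant M c)
    (hδc : delta (n + 1) c = 0) {b : (Fin (n + 1) → Y) → V} (hb : Bdd b)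
    (hbM : IsEquivariant M b) (hcb : pullback i c = delta n b) :
    ∃ b' : (Fin (n + 1) → X) → V, Bdd b' ∧ IsEquivariant M b' ∧ c = delta n b' := by
  refine ⟨pullback p b - RelBdd.prismHomotopy (MulActionHom.id M) (i.comp p) n c,
    (hb.pullback p).sub (hc.prismHomotopy _ _), (hbM.pullback p).sub (hcM.prismHomotopy _ _), ?_⟩
  have hhom := delta_prismHomotopy_add_prismHomotopy_delta (MulActionHom.id M) (i.comp p) c
  rw [hδc, prismHomotopy_zero, add_zero] at hhom
  rw [delta_sub, hhom, delta_pullback, ← hcb]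
  exact (sub_sub_cancel _ _).symm

end Retraction

theorem eq_of_pullback_eq_of_delta_eq_zero {X Y V : Type*} [AddCommGroup V] [Module ℝ V]
    (i : Y → X) (p : X → Y) {c c' : (Fin 1 → X) → V} (hc : delta 0 c = 0)
    (hc' : delta 0 c' = 0) (h : pullback i c = pullback i c') : c = c' := by
  rw [← pullback_eq_self_of_delta_eq_zero (i ∘ p) hc,
    ← pullback_eq_self_of_delta_eq_zero (i ∘ p) hc']
  exact congrArg (pullback p) h

section NormalSubgroup

variable (N : Subgroup G)

def quotEmbHom : G ⧸ N →[G] Cos G {K : Subgroup G | K ≤ N} where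
  toFun := quotEmb N
  map_smul' _ _ := rfl

def cosProj : Cos G {K : Subgroup G | K ≤ N} →[G] G ⧸ N where
  toFun x := Subgroup.quotientMapOfLE x.1.2 x.2
  map_smul' g := by
    rintro ⟨H, q⟩
    induction q using QuotientGroup.induction_on
    rfl

theorem cosProj_quotEmbHom : Function.LeftInverse (cosProj N) (quotEmbHom N) := fun q => by
  induction q using QuotientGroup.induction_on
  rfl

theorem smul_eq_self_of_mem [N.Normal] {u : G} (hu : u ∈ N) (q : G ⧸ N) : u • q = q := by
  induction q using QuotientGroup.induction_on with
  | H g =>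
    rw [MulAction.Quotient.smul_coe, smul_eq_mul, QuotientGroup.mk_mul,
      (QuotientGroup.eq_one_iff u).2 hu, one_mul]

end NormalSubgroup

theorem bounded_bredon_of_normal_subgroup_general (G : Type u) [Group G]
    (N : Subgroup G) [N.Normal]
    (V : Type v) [NormedAddCommGroup V] [NormedSpace ℝ V] [DistribMulAction G V]
    [SMulCommClass G ℝ V] :
    -- (a) bounded `G`-equivariant cochains on `(G/N)^{•+1}` take values in `V^N`
    (∀ (n : ℕ) (f : (Fin (n + 1) → G ⧸ N) → V),
      (∀ (g : G) (x : Fin (n + 1) → G ⧸ N), f (fun j => g • x j) = g • f x) →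
      ∀ (x : Fin (n + 1) → G ⧸ N) (u : G), u ∈ N → u • f x = f x) ∧
    -- (b) restriction along `G/N ⊆ G/F⟨N⟩` induces an isomorphism on cohomology:
    -- degree 0: bijection on `0`-cocycles
    ((∀ f : (Fin 1 → G ⧸ N) → V,
        Bdd f →
        (∀ (g : G) (x : Fin 1 → G ⧸ N), f (fun j => g • x j) = g • f x) →
        delta 0 f = 0 →
        ∃ c : (Fin 1 → Cos G {K : Subgroup G | K ≤ N}) → V,
          Bdd c ∧
          (∀ (g : G) (x : Fin 1 → Cos G {K : Subgroup G | K ≤ N}),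
            c (fun j => g • x j) = g • c x) ∧
          delta 0 c = 0 ∧
          ∀ x : Fin 1 → G ⧸ N, c (fun j => quotEmb N (x j)) = f x) ∧
      ∀ c c' : (Fin 1 → Cos G {K : Subgroup G | K ≤ N}) → V,
        Bdd c → (∀ (g : G) (x : Fin 1 → Cos G {K : Subgroup G | K ≤ N}),
          c (fun j => g • x j) = g • c x) → delta 0 c = 0 →
        Bdd c' → (∀ (g : G) (x : Fin 1 → Cos G {K : Subgroup G | K ≤ N}),
          c' (fun j => g • x j) = g • c' x) → delta 0 c' = 0 →
        (∀ x : Fin 1 → G ⧸ N,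
          c (fun j => quotEmb N (x j)) = c' (fun j => quotEmb N (x j))) →
        c = c') ∧
    -- degrees `n ≥ 1`: surjectivity and injectivity up to coboundaries
    ∀ m : ℕ,
      (∀ f : (Fin (m + 2) → G ⧸ N) → V,
        Bdd f →
        (∀ (g : G) (x : Fin (m + 2) → G ⧸ N), f (fun j => g • x j) = g • f x) →
        delta (m + 1) f = 0 →
        ∃ c : (Fin (m + 2) → Cos G {K : Subgroup G | K ≤ N}) → V,
          Bdd c ∧
          (∀ (g : G) (x : Fin (m + 2) → Cos G {K : Subgroup G | K ≤ N}),
            c (fun j => g • x j) = g • c x) ∧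
          delta (m + 1) c = 0 ∧
          ∃ b : (Fin (m + 1) → G ⧸ N) → V,
            Bdd b ∧
            (∀ (g : G) (x : Fin (m + 1) → G ⧸ N), b (fun j => g • x j) = g • b x) ∧
            ∀ x : Fin (m + 2) → G ⧸ N,
              c (fun j => quotEmb N (x j)) = f x + delta m b x) ∧
      ∀ c : (Fin (m + 2) → Cos G {K : Subgroup G | K ≤ N}) → V,
        Bdd c →
        (∀ (g : G) (x : Fin (m + 2) → Cos G {K : Subgroup G | K ≤ N}),
          c (fun j => g • x j) = g • c x) →
        delta (m + 1) c = 0 →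
        (∃ b : (Fin (m + 1) → G ⧸ N) → V,
          Bdd b ∧
          (∀ (g : G) (x : Fin (m + 1) → G ⧸ N), b (fun j => g • x j) = g • b x) ∧
          ∀ x : Fin (m + 2) → G ⧸ N, c (fun j => quotEmb N (x j)) = delta m b x) →
        ∃ b' : (Fin (m + 1) → Cos G {K : Subgroup G | K ≤ N}) → V,
          Bdd b' ∧
          (∀ (g : G) (x : Fin (m + 1) → Cos G {K : Subgroup G | K ≤ N}),
            b' (fun j => g • x j) = g • b' x) ∧
          c = delta m b' := by
  refine ⟨fun n f hf x u hu => IsEquivariant.smul_eq_self hf (smul_eq_self_of_mem N hu) x,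
    ⟨fun f hf hfG hδf => ?_, fun c c' _ _ hc _ _ hc' h => ?_⟩,
    fun m => ⟨fun f hf hfG hδf => ?_, fun c hc hcG hδc ⟨b, hb, hbG, hcb⟩ => ?_⟩⟩
  · obtain ⟨c, hc, hcG, hδc, hcf⟩ := exists_cocycle_pullback_eq (cosProj_quotEmbHom N) hf hfG hδf
    exact ⟨c, hc, hcG, hδc, congrFun hcf⟩
  · exact eq_of_pullback_eq_of_delta_eq_zero (quotEmb N) (cosProj N) hc hc' (funext h)
  · obtain ⟨c, hc, hcG, hδc, hcf⟩ := exists_cocycle_pullback_eq (cosProj_quotEmbHom N) hf hfG hδf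
    refine ⟨c, hc, hcG, hδc, 0, ⟨0, fun _ => by simp⟩, fun g _ => (smul_zero g).symm, fun x => ?_⟩
    exact (congrFun hcf x).trans (by simp [delta])
  · exact exists_eq_delta_of_pullback_eq_delta (i := quotEmbHom N) (cosProj N) hc hcG hδc hb hbG
      (funext hcb)

/-- Corollary 3.10.  Let `N` be a normal subgroup of `G`,
`F⟨N⟩ = {K | K ≤ N}` the family generated by `N`, and `V` a normed `ℝG`-module.
Every bounded `G`-equivariant cochain on `(G/N)^{•+1}` takes values in the `N`-fixed
vectors `V^N` (so, since it also factors through `G/N`, the complex of bounded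
`G`-equivariant `V`-cochains on `(G/N)^{•+1}` computes the ordinary bounded
cohomology `H^•_b(G/N; V^N)`); moreover restriction along `(G/N)^{n+1} ⊆
(G/F⟨N⟩)^{n+1}` induces an isomorphism on cohomology in every degree.  Hence
`H^n_{F⟨N⟩,b}(G;V) ≅ H^n_b(G/N; V^N)` for all `n ≥ 0`. -/
theorem bounded_bredon_of_normal_subgroup (G : Type u) [Group G]
    (N : Subgroup G) [N.Normal]
    (V : Type v) [NormedAddCommGroup V] [NormedSpace ℝ V] [DistribMulAction G V]
    [SMulCommClass G ℝ V] (hV : ∀ (g : G) (v : V), ‖g • v‖ = ‖v‖) :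
    -- (a) bounded `G`-equivariant cochains on `(G/N)^{•+1}` take values in `V^N`
    (∀ (n : ℕ) (f : (Fin (n + 1) → G ⧸ N) → V),
      (∀ (g : G) (x : Fin (n + 1) → G ⧸ N), f (fun j => g • x j) = g • f x) →
      ∀ (x : Fin (n + 1) → G ⧸ N) (u : G), u ∈ N → u • f x = f x) ∧
    -- (b) restriction along `G/N ⊆ G/F⟨N⟩` induces an isomorphism on cohomology:
    -- degree 0: bijection on `0`-cocycles
    ((∀ f : (Fin 1 → G ⧸ N) → V,
        Bdd f →
        (∀ (g : G) (x : Fin 1 → G ⧸ N), f (fun j => g • x j) = g • f x) →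
        delta 0 f = 0 →
        ∃ c : (Fin 1 → Cos G {K : Subgroup G | K ≤ N}) → V,
          Bdd c ∧
          (∀ (g : G) (x : Fin 1 → Cos G {K : Subgroup G | K ≤ N}),
            c (fun j => g • x j) = g • c x) ∧
          delta 0 c = 0 ∧
          ∀ x : Fin 1 → G ⧸ N, c (fun j => quotEmb N (x j)) = f x) ∧
      ∀ c c' : (Fin 1 → Cos G {K : Subgroup G | K ≤ N}) → V,
        Bdd c → (∀ (g : G) (x : Fin 1 → Cos G {K : Subgroup G | K ≤ N}),
          c (fun j => g • x j) = g • c x) → delta 0 c = 0 →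
        Bdd c' → (∀ (g : G) (x : Fin 1 → Cos G {K : Subgroup G | K ≤ N}),
          c' (fun j => g • x j) = g • c' x) → delta 0 c' = 0 →
        (∀ x : Fin 1 → G ⧸ N,
          c (fun j => quotEmb N (x j)) = c' (fun j => quotEmb N (x j))) →
        c = c') ∧
    -- degrees `n ≥ 1`: surjectivity and injectivity up to coboundaries
    ∀ m : ℕ,
      (∀ f : (Fin (m + 2) → G ⧸ N) → V,
        Bdd f →
        (∀ (g : G) (x : Fin (m + 2) → G ⧸ N), f (fun j => g • x j) = g • f x) →
        delta (m + 1) f = 0 →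
        ∃ c : (Fin (m + 2) → Cos G {K : Subgroup G | K ≤ N}) → V,
          Bdd c ∧
          (∀ (g : G) (x : Fin (m + 2) → Cos G {K : Subgroup G | K ≤ N}),
            c (fun j => g • x j) = g • c x) ∧
          delta (m + 1) c = 0 ∧
          ∃ b : (Fin (m + 1) → G ⧸ N) → V,
            Bdd b ∧
            (∀ (g : G) (x : Fin (m + 1) → G ⧸ N), b (fun j => g • x j) = g • b x) ∧
            ∀ x : Fin (m + 2) → G ⧸ N,
              c (fun j => quotEmb N (x j)) = f x + delta m b x) ∧
      ∀ c : (Fin (m + 2) → Cos G {K : Subgroup G | K ≤ N}) → V,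
        Bdd c →
        (∀ (g : G) (x : Fin (m + 2) → Cos G {K : Subgroup G | K ≤ N}),
          c (fun j => g • x j) = g • c x) →
        delta (m + 1) c = 0 →
        (∃ b : (Fin (m + 1) → G ⧸ N) → V,
          Bdd b ∧
          (∀ (g : G) (x : Fin (m + 1) → G ⧸ N), b (fun j => g • x j) = g • b x) ∧
          ∀ x : Fin (m + 2) → G ⧸ N, c (fun j => quotEmb N (x j)) = delta m b x) →
        ∃ b' : (Fin (m + 1) → Cos G {K : Subgroup G | K ≤ N}) → V,
          Bdd b' ∧
          (∀ (g : G) (x : Fin (m + 1) → Cos G {K : Subgroup G | K ≤ N}),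
            b' (fun j => g • x j) = g • b' x) ∧
          c = delta m b' :=
  bounded_bredon_of_normal_subgroup_general G N V

end RelBdd
end
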